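/- arXiv:1205.5614 — 5 statements merged into one kernel-verified Lean document; each statement's English description precedes it below -/
import Mathlib

section
/- Let H₁ be a 1 × n_s complex matrix (a row vector), H₂ an n_d × 1 complex matrix (a column vector), and a ≥ 0 real. Then the largest eigenvalue of the n_s × n_s Hermitian matrix A = H₁ᴴ·H₂ᴴ·(a·H₂·H₂ᴴ + I)⁻¹·H₂·H₁ equals ‖H₁‖²·‖H₂‖² / (a·‖H₂‖² + 1), where ‖·‖² denotes the sum of the squared moduli of all entries (squared Frobenius norm). In particular, when q = min(n_d, n_r) = 1 with n_r = 1 the maximum eigenvalue of the equivalent channel matrix factors as λ_max = (h₁ᴴh₁)·(h₂ᴴh₂)/(a·h₂ᴴh₂ + 1). -/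
/-!
Write `c = ‖H₂‖²` and `t = ‖H₁‖²`. Since `H₂ᴴ H₂ = c`, the projection-like matrix `P = H₂ H₂ᴴ`
satisfies `P² = c P`, so `(a P + 1)⁻¹ = 1 - a/(a c + 1) · P` and the middle factor collapses:
`H₂ᴴ (a P + 1)⁻¹ H₂ = c/(a c + 1)`. Hence `A = c/(a c + 1) · H₁ᴴ H₁`, and as `H₁ H₁ᴴ = t` this
gives `A² = s A` with `s = trace A = t c/(a c + 1) ≥ 0`. Every eigenvalue of `A` is then `0` or
`s`, and since they sum to `s`, the largest one is `s`.
-/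

open Matrix

namespace Matrix

variable {m n R : Type*} [Fintype m] [Fintype n]

theorem eq_trace_smul_one_of_unique [Unique n] [DecidableEq n] [CommSemiring R]
    (M : Matrix n n R) : M = M.trace • (1 : Matrix n n R) := by
  ext i j
  rw [Subsingleton.elim i default, Subsingleton.elim j default]
  simp [trace]

theorem trace_mul_conjTranspose_eq_sum_norm_sq {𝕜 : Type*} [RCLike 𝕜] (M : Matrix m n 𝕜) :
    (M * Mᴴ).trace = ((∑ i, ∑ j, ‖M i j‖ ^ 2 : ℝ) : 𝕜) := by
  simp [trace, mul_apply, RCLike.mul_conj]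

theorem trace_conjTranspose_mul_eq_sum_norm_sq {𝕜 : Type*} [RCLike 𝕜] (M : Matrix m n 𝕜) :
    (Mᴴ * M).trace = ((∑ i, ∑ j, ‖M i j‖ ^ 2 : ℝ) : 𝕜) := by
  rw [trace_mul_comm, trace_mul_conjTranspose_eq_sum_norm_sq]

theorem mul_conjTranspose_eq_sum_norm_sq_smul_one {𝕜 : Type*} [RCLike 𝕜] [Unique m]
    [DecidableEq m] (M : Matrix m n 𝕜) : M * Mᴴ = ((∑ i, ∑ j, ‖M i j‖ ^ 2 : ℝ) : 𝕜) • 1 := by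
  rw [eq_trace_smul_one_of_unique (M * Mᴴ), trace_mul_conjTranspose_eq_sum_norm_sq]

theorem conjTranspose_mul_eq_sum_norm_sq_smul_one {𝕜 : Type*} [RCLike 𝕜] [Unique n]
    [DecidableEq n] (M : Matrix m n 𝕜) : Mᴴ * M = ((∑ i, ∑ j, ‖M i j‖ ^ 2 : ℝ) : 𝕜) • 1 := by
  rw [eq_trace_smul_one_of_unique (Mᴴ * M), trace_conjTranspose_mul_eq_sum_norm_sq]

theorem mul_mul_mul_eq_smul_of_mul_eq_smul_one [CommSemiring R] [DecidableEq m]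
    {B : Matrix n m R} {C : Matrix m n R} {c : R} (hCB : C * B = c • 1) :
    B * C * (B * C) = c • (B * C) := by
  rw [Matrix.mul_assoc, ← Matrix.mul_assoc C, hCB, Matrix.smul_mul, Matrix.one_mul,
    Matrix.mul_smul]

theorem inv_smul_add_one_of_mul_self_eq_smul {𝕜 : Type*} [Field 𝕜] [DecidableEq n]
    {P : Matrix n n 𝕜} {a c : 𝕜} (hP : P * P = c • P) (hac : a * c + 1 ≠ 0) :
    (a • P + 1)⁻¹ = 1 - (a / (a * c + 1)) • P := by
  refine inv_eq_right_inv ?_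
  have hcoeff : a - a * (a / (a * c + 1)) * c - a / (a * c + 1) = 0 := by
    field_simp
    ring
  rw [mul_sub, mul_one, add_mul, one_mul, smul_mul_smul_comm, hP, smul_smul]
  calc _ = 1 + (a - a * (a / (a * c + 1)) * c - a / (a * c + 1)) • P := by
        rw [sub_smul, sub_smul]
        abel
    _ = 1 := by rw [hcoeff, zero_smul, add_zero]

theorem mul_inv_smul_mul_add_one_mul {𝕜 : Type*} [Field 𝕜] [DecidableEq m] [DecidableEq n]
    {B : Matrix n m 𝕜} {C : Matrix m n 𝕜} {a c : 𝕜} (hCB : C * B = c • 1) (hac : a * c + 1 ≠ 0) :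
    C * (a • (B * C) + 1)⁻¹ * B = (c / (a * c + 1)) • 1 := by
  rw [inv_smul_add_one_of_mul_self_eq_smul (mul_mul_mul_eq_smul_of_mul_eq_smul_one hCB) hac,
    Matrix.mul_sub, Matrix.mul_one, Matrix.sub_mul, Matrix.mul_smul, Matrix.smul_mul,
    ← Matrix.mul_assoc C B C, Matrix.mul_assoc (C * B), hCB, smul_mul_smul_comm, Matrix.one_mul,
    smul_smul, ← sub_smul]
  congr 1
  rw [eq_div_iff hac, sub_mul, div_mul_eq_mul_div, div_mul_cancel₀ _ hac]
  ring

theorem eq_zero_or_eq_of_mulVec_eq_smul_of_mul_self_eq_smul {𝕜 : Type*} [Field 𝕜]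
    {A : Matrix n n 𝕜} {r μ : 𝕜} {v : n → 𝕜} (hA : A * A = r • A) (hv : v ≠ 0)
    (hAv : A *ᵥ v = μ • v) : μ = 0 ∨ μ = r := by
  have hsq : (μ * μ) • v = (r * μ) • v := by
    rw [← smul_smul, ← hAv, ← mulVec_smul, ← hAv, mulVec_mulVec, hA, smul_mulVec, hAv, smul_smul]
  have hroot : μ * (μ - r) = 0 := by
    rw [mul_sub, sub_eq_zero, mul_comm μ r]
    exact smul_left_injective 𝕜 hv hsq
  rcases mul_eq_zero.mp hroot with h | h
  · exact Or.inl h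
  · exact Or.inr (sub_eq_zero.mp h)

end Matrix

theorem Real.iSup_eq_of_forall_eq_zero_or_eq_of_sum_eq {ι : Type*} [Fintype ι] {f : ι → ℝ}
    {r : ℝ} (hf : ∀ i, f i = 0 ∨ f i = r) (hsum : ∑ i, f i = r) (hr : 0 ≤ r) :
    ⨆ i, f i = r := by
  refine le_antisymm (Real.iSup_le (fun i => ?_) hr) ?_
  · rcases hf i with h | h <;> simp [h, hr]
  · by_cases hex : ∃ i, f i = r
    · obtain ⟨i, hi⟩ := hex
      exact hi ▸ le_ciSup (Set.finite_range f).bddAbove i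
    · push Not at hex
      have hzero : ∀ i, f i = 0 := fun i => (hf i).resolve_right (hex i)
      have hr0 : r = 0 := by simp [← hsum, hzero]
      exact hr0 ▸ Real.iSup_nonneg fun i => (hzero i).ge

namespace Matrix.IsHermitian

variable {n 𝕜 : Type*} [Fintype n] [DecidableEq n] [RCLike 𝕜]

theorem eigenvalues_eq_zero_or_eq_of_mul_self_eq_smul {A : Matrix n n 𝕜} (hA : A.IsHermitian)
    {r : ℝ} (hAA : A * A = (r : 𝕜) • A) (i : n) :
    hA.eigenvalues i = 0 ∨ hA.eigenvalues i = r := by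
  have hv : A *ᵥ ⇑(hA.eigenvectorBasis i) =
      (hA.eigenvalues i : 𝕜) • ⇑(hA.eigenvectorBasis i) := by
    rw [hA.mulVec_eigenvectorBasis, RCLike.real_smul_eq_coe_smul (K := 𝕜)]
  have hne : ⇑(hA.eigenvectorBasis i) ≠ 0 :=
    (WithLp.ofLp_eq_zero 2).ne.2 (hA.eigenvectorBasis.orthonormal.ne_zero i)
  exact_mod_cast eq_zero_or_eq_of_mulVec_eq_smul_of_mul_self_eq_smul hAA hne hv

theorem iSup_eigenvalues_eq_of_mul_self_eq_smul {A : Matrix n n 𝕜} (hA : A.IsHermitian) {r : ℝ}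
    (hAA : A * A = (r : 𝕜) • A) (htrace : A.trace = r) (hr : 0 ≤ r) :
    ⨆ i, hA.eigenvalues i = r := by
  refine Real.iSup_eq_of_forall_eq_zero_or_eq_of_sum_eq
    (hA.eigenvalues_eq_zero_or_eq_of_mul_self_eq_smul hAA) ?_ hr
  have h := hA.trace_eq_sum_eigenvalues
  rw [htrace] at h
  exact_mod_cast h.symm

end Matrix.IsHermitian

/-- For a `1 × n_s` row vector `H₁`, an `n_d × 1` column vector `H₂`
and `a ≥ 0`, the largest eigenvalue of `A = H₁ᴴ·H₂ᴴ·(a·H₂·H₂ᴴ + I)⁻¹·H₂·H₁` equals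
`‖H₁‖²·‖H₂‖²/(a·‖H₂‖² + 1)` with `‖·‖²` the squared Frobenius norm. -/
theorem stmt9 {ns nd : ℕ} (H₁ : Matrix (Fin 1) (Fin ns) ℂ)
    (H₂ : Matrix (Fin nd) (Fin 1) ℂ) (a : ℝ) (ha : 0 ≤ a)
    (A : Matrix (Fin ns) (Fin ns) ℂ)
    (hA : A = H₁ᴴ * H₂ᴴ * ((a : ℂ) • (H₂ * H₂ᴴ) + 1)⁻¹ * H₂ * H₁) :
    ∀ (h1 : A.IsHermitian),
      (⨆ i, h1.eigenvalues i)
        = (∑ i, ∑ j, ‖H₁ i j‖ ^ 2) * (∑ i, ∑ j, ‖H₂ i j‖ ^ 2)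
            / (a * (∑ i, ∑ j, ‖H₂ i j‖ ^ 2) + 1) := by
  intro h1
  have hH₁ := mul_conjTranspose_eq_sum_norm_sq_smul_one H₁
  have hH₂ := conjTranspose_mul_eq_sum_norm_sq_smul_one H₂
  -- the general lemmas coerce by `RCLike.ofReal`, which is only defeq to `Complex.ofReal`
  rw [RCLike.ofReal_eq_complex_ofReal] at hH₁ hH₂
  have ht : 0 ≤ ∑ i, ∑ j, ‖H₁ i j‖ ^ 2 := by positivity
  have hc : 0 ≤ ∑ i, ∑ j, ‖H₂ i j‖ ^ 2 := by positivity
  generalize ∑ i, ∑ j, ‖H₁ i j‖ ^ 2 = t at hH₁ ht ⊢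
  generalize ∑ i, ∑ j, ‖H₂ i j‖ ^ 2 = c at hH₂ hc ⊢
  have hden : 0 < a * c + 1 := by positivity
  have hA' : A = ((c : ℂ) / (a * c + 1)) • (H₁ᴴ * H₁) := by
    rw [hA, Matrix.mul_assoc H₁ᴴ, Matrix.mul_assoc H₁ᴴ,
      mul_inv_smul_mul_add_one_mul hH₂ (by exact_mod_cast hden.ne'), Matrix.mul_smul,
      Matrix.mul_one, Matrix.smul_mul]
  refine h1.iSup_eigenvalues_eq_of_mul_self_eq_smul ?_ ?_ (by positivity)
  · rw [hA', smul_mul_smul_comm, mul_mul_mul_eq_smul_of_mul_eq_smul_one hH₁, smul_smul, smul_smul,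
      RCLike.ofReal_eq_complex_ofReal]
    congr 1
    push_cast
    ring
  · rw [hA', trace_smul, trace_mul_comm, hH₁, trace_smul, trace_one,
      RCLike.ofReal_eq_complex_ofReal]
    simp only [Fintype.card_unique, Nat.cast_one, smul_eq_mul, mul_one]
    push_cast
    ring
end

section
/- (Andréief/Chiani determinant integration identity.) Let q ≥ 1 be an integer, let b ∈ (0, ∞], and let φ₁, …, φ_q, ψ₁, …, ψ_q : ℝ → ℝ be measurable functions such that each product φᵢ·ψⱼ is Lebesgue integrable on the interval (0, b). Then the integral over the ordered region {x ∈ ℝ^q : 0 < x₁ < x₂ < ⋯ < x_q < b} of det[φᵢ(xⱼ)]_{i,j=1..q} · det[ψᵢ(xⱼ)]_{i,j=1..q} with respect to Lebesgue measure dx₁⋯dx_q equals det of the q × q matrix whose (i,j)-entry is ∫₀^b φᵢ(x)·ψⱼ(x) dx. -/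
/-!
Expanding `det Ψ(x)` by the Leibniz formula writes `det Φ(x) · det Ψ(x)` as a signed sum, over
permutations `τ`, of determinants whose `j`-th column depends on `xⱼ` alone. Integrating such a
determinant over the whole product space factorises column by column (Fubini), so the integral
over all of `ℝ^q` is `∑_τ sign τ · det(A with columns permuted by τ) = q! · det A`, where
`A i j = ∫ φᵢ ψⱼ`.

The integrand is also invariant under permuting the coordinates. For a measure without atoms almost
every point has pairwise distinct coordinates, hence is sorted by exactly one permutation, so the
whole space is, up to a null set, the disjoint union of the `q!` images of the ordered region under
coordinate permutations, each carrying the same integral. Restricting Lebesgue measure to `(0, b)`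
reduces the theorem to this.
-/

open MeasureTheory Equiv Matrix

theorem Equiv.Perm.intCast_sign_mul_self {ι R : Type*} [Fintype ι] [DecidableEq ι] [Ring R]
    (σ : Perm ι) : (Perm.sign σ : R) * Perm.sign σ = 1 := by
  rw [← Int.cast_mul, Int.units_coe_mul_self, Int.cast_one]

namespace Matrix

variable {ι R : Type*} [Fintype ι] [DecidableEq ι] [CommRing R]

theorem det_mul_det_eq_sum (M N : Matrix ι ι R) :
    M.det * N.det = ∑ τ : Perm ι, Perm.sign τ * (of fun i j => M i j * N (τ j) j).det := by
  rw [det_apply' N, Finset.mul_sum]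
  refine Finset.sum_congr rfl fun τ _ => ?_
  simp_rw [mul_comm (M _ _), det_mul_row]
  ring

theorem det_submatrix_mul_det_submatrix (M N : Matrix ι ι R) (σ : Perm ι) :
    (M.submatrix id σ).det * (N.submatrix id σ).det = M.det * N.det := by
  rw [det_permute', det_permute']
  linear_combination (M.det * N.det) * Perm.intCast_sign_mul_self (R := R) σ

end Matrix

theorem Tuple.strictMono_comp_iff_eq_sort {n : ℕ} {α : Type*} [LinearOrder α] {x : Fin n → α}
    (hx : Function.Injective x) (σ : Perm (Fin n)) : StrictMono (x ∘ σ) ↔ σ = Tuple.sort x := by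
  rw [Tuple.eq_sort_iff]
  refine ⟨fun h => ⟨h.monotone, fun i j hij hxij => ?_⟩,
    fun h => h.1.strictMono_of_injective (hx.comp σ.injective)⟩
  exact absurd (σ.injective (hx hxij)) hij.ne

namespace MeasureTheory

section DetIntegral

variable {ι α 𝕜 : Type*} [Fintype ι] [DecidableEq ι] [RCLike 𝕜] [MeasurableSpace α]
  {μ : Measure α} [SigmaFinite μ]

theorem integrable_det_of_columns {f : ι → ι → α → 𝕜} (hf : ∀ i j, Integrable (f i j) μ) :
    Integrable (fun x : ι → α => (of fun i j => f i j (x j)).det) (Measure.pi fun _ => μ) := by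
  simp only [det_apply', of_apply]
  exact integrable_finsetSum _ fun σ _ =>
    (Integrable.fintype_prod fun i => hf (σ i) i).const_mul _

theorem integral_det_of_columns {f : ι → ι → α → 𝕜} (hf : ∀ i j, Integrable (f i j) μ) :
    ∫ x : ι → α, (of fun i j => f i j (x j)).det ∂(Measure.pi fun _ => μ)
      = (of fun i j => ∫ t, f i j t ∂μ).det := by
  simp only [det_apply', of_apply]
  rw [integral_finsetSum _ fun σ _ =>
    (Integrable.fintype_prod fun i => hf (σ i) i).const_mul _]
  refine Finset.sum_congr rfl fun σ _ => ?_
  rw [integral_const_mul, integral_fintype_prod_eq_prod (fun i => f (σ i) i)]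

variable {φ ψ : ι → α → 𝕜}

theorem integrable_det_mul_det (h : ∀ i j, Integrable (fun t => φ i t * ψ j t) μ) :
    Integrable (fun x : ι → α => (of fun i j => φ i (x j)).det * (of fun i j => ψ i (x j)).det)
      (Measure.pi fun _ => μ) := by
  simp only [det_mul_det_eq_sum, of_apply]
  exact integrable_finsetSum _ fun τ _ =>
    (integrable_det_of_columns fun i j => h i (τ j)).const_mul _

theorem integral_det_mul_det (h : ∀ i j, Integrable (fun t => φ i t * ψ j t) μ) :
    ∫ x : ι → α, (of fun i j => φ i (x j)).det * (of fun i j => ψ i (x j)).det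
        ∂(Measure.pi fun _ => μ)
      = (Fintype.card ι).factorial * (of fun i j => ∫ t, φ i t * ψ j t ∂μ).det := by
  set A := of fun i j => ∫ t, φ i t * ψ j t ∂μ
  simp only [det_mul_det_eq_sum, of_apply]
  calc ∫ x, ∑ τ : Perm ι, (Perm.sign τ : 𝕜) * (of fun i j => φ i (x j) * ψ (τ j) (x j)).det
        ∂(Measure.pi fun _ => μ)
      = ∑ τ : Perm ι, (Perm.sign τ : 𝕜) * (A.submatrix id τ).det := by
        rw [integral_finsetSum _ fun τ _ =>
          (integrable_det_of_columns fun i j => h i (τ j)).const_mul _]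
        refine Finset.sum_congr rfl fun τ _ => ?_
        rw [integral_const_mul, integral_det_of_columns fun i j => h i (τ j)]
        rfl
    _ = (Fintype.card ι).factorial * A.det := by
        simp only [det_permute', ← mul_assoc, Perm.intCast_sign_mul_self, one_mul,
          Finset.sum_const, Finset.card_univ, Fintype.card_perm, nsmul_eq_mul]

end DetIntegral

theorem setIntegral_preimage_comp_perm {ι α E : Type*} [Fintype ι] [MeasurableSpace α]
    [NormedAddCommGroup E] [NormedSpace ℝ E] {μ : Measure α} [SigmaFinite μ]
    {F : (ι → α) → E} (hF : ∀ (σ : Perm ι) x, F (x ∘ σ) = F x) (σ : Perm ι) (s : Set (ι → α)) :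
    ∫ x in (· ∘ σ) ⁻¹' s, F x ∂(Measure.pi fun _ => μ)
      = ∫ x in s, F x ∂(Measure.pi fun _ => μ) := by
  set T := MeasurableEquiv.piCongrLeft (fun _ : ι => α) σ.symm
  have hT : ⇑T = (· ∘ σ) := by
    ext x j
    simp [T, MeasurableEquiv.coe_piCongrLeft, Equiv.piCongrLeft_apply_eq_cast]
  have := (measurePreserving_piCongrLeft (fun _ : ι => μ) σ.symm).setIntegral_preimage_emb
    T.measurableEmbedding F s
  rw [hT] at this
  simpa only [hF] using this

theorem measurableSet_setOf_strictMono {ι : Type*} [Preorder ι] [Countable ι] :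
    MeasurableSet {x : ι → ℝ | StrictMono x} := by
  simp only [StrictMono, Set.ofPred_forall]
  exact .iInter fun i => .iInter fun j => .iInter fun _ =>
    measurableSet_lt (measurable_pi_apply i) (measurable_pi_apply j)

section NoAtoms

variable {μ : Measure ℝ} [SigmaFinite μ] [NullSingletonClass μ]

theorem Measure.pi_setOf_apply_eq_apply {ι : Type*} [Fintype ι] {i j : ι} (hij : i ≠ j) :
    Measure.pi (fun _ : ι => μ) {x | x i = x j} = 0 := by
  classical
  set e := MeasurableEquiv.piEquivPiSubtypeProd (fun _ : ι => ℝ) (· = j)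
  have he := measurePreserving_piEquivPiSubtypeProd (fun _ : ι => μ) (· = j)
  -- once `x j` is split off, every slice of the diagonal is a coordinate hyperplane
  set S : Set (({k // k = j} → ℝ) × ({k // ¬ k = j} → ℝ)) := {p | p.2 ⟨i, hij⟩ = p.1 ⟨j, rfl⟩}
  have hS : MeasurableSet S :=
    measurableSet_eq_fun ((measurable_pi_apply _).comp measurable_snd)
      ((measurable_pi_apply _).comp measurable_fst)
  have hpre : {x : ι → ℝ | x i = x j} = e ⁻¹' S := rfl
  rw [hpre, he.measure_preimage hS.nullMeasurableSet, Measure.measure_prod_null hS]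
  exact Filter.Eventually.of_forall fun u => Measure.pi_hyperplane _ _ _

theorem Measure.ae_pi_injective {ι : Type*} [Fintype ι] :
    ∀ᵐ x ∂(Measure.pi fun _ : ι => μ), Function.Injective x := by
  classical
  have hne (i j : ι) : ∀ᵐ x ∂(Measure.pi fun _ : ι => μ), i ≠ j → x i ≠ x j :=
    if hij : i = j then .of_forall fun _ h => absurd hij h
    else (measure_eq_zero_iff_ae_notMem.1 (Measure.pi_setOf_apply_eq_apply hij)).mono
      fun _ hx _ => hx
  filter_upwards [ae_all_iff.2 fun i => ae_all_iff.2 (hne i)] with x hx i j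
  exact not_imp_not.1 (hx i j)

theorem integral_eq_factorial_smul_setIntegral_strictMono {n : ℕ} {E : Type*}
    [NormedAddCommGroup E] [NormedSpace ℝ E] {F : (Fin n → ℝ) → E}
    (hF : Integrable F (Measure.pi fun _ => μ)) (hsymm : ∀ (σ : Perm (Fin n)) x, F (x ∘ σ) = F x) :
    ∫ x, F x ∂(Measure.pi fun _ => μ)
      = n.factorial • ∫ x in {x | StrictMono x}, F x ∂(Measure.pi fun _ => μ) := by
  set S : Set (Fin n → ℝ) := {x | StrictMono x}
  have hS (σ : Perm (Fin n)) : MeasurableSet ((· ∘ σ) ⁻¹' S) :=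
    measurableSet_setOf_strictMono.preimage (measurable_pi_lambda _ fun i => measurable_pi_apply _)
  have hpartition : ∀ᵐ x ∂(Measure.pi fun _ => μ),
      ∑ σ : Perm (Fin n), ((· ∘ σ) ⁻¹' S).indicator F x = F x := by
    filter_upwards [Measure.ae_pi_injective] with x hx
    rw [Finset.sum_eq_single_of_mem (Tuple.sort x) (Finset.mem_univ _) fun σ _ hσ =>
      Set.indicator_of_notMem (mt (Tuple.strictMono_comp_iff_eq_sort hx σ).1 hσ) F]
    exact Set.indicator_of_mem ((Tuple.strictMono_comp_iff_eq_sort hx _).2 rfl) F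
  calc ∫ x, F x ∂(Measure.pi fun _ => μ)
      = ∑ σ : Perm (Fin n), ∫ x, ((· ∘ σ) ⁻¹' S).indicator F x ∂(Measure.pi fun _ => μ) := by
        rw [← integral_finsetSum _ fun σ _ => hF.indicator (hS σ)]
        exact integral_congr_ae (hpartition.mono fun x hx => hx.symm)
    _ = ∑ _σ : Perm (Fin n), ∫ x in S, F x ∂(Measure.pi fun _ => μ) := by
        simp only [integral_indicator (hS _), setIntegral_preimage_comp_perm hsymm]
    _ = n.factorial • ∫ x in S, F x ∂(Measure.pi fun _ => μ) := by
        rw [Finset.sum_const, Finset.card_univ, Fintype.card_perm, Fintype.card_fin]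

variable (μ) in
theorem setIntegral_strictMono_det_mul_det {n : ℕ} {φ ψ : Fin n → ℝ → ℝ}
    (h : ∀ i j, Integrable (fun t => φ i t * ψ j t) μ) :
    ∫ x in {x | StrictMono x}, (of fun i j => φ i (x j)).det * (of fun i j => ψ i (x j)).det
        ∂(Measure.pi fun _ => μ)
      = (of fun i j => ∫ t, φ i t * ψ j t ∂μ).det := by
  have hsymm (σ : Perm (Fin n)) (x : Fin n → ℝ) :
      (of fun i j => φ i ((x ∘ σ) j)).det * (of fun i j => ψ i ((x ∘ σ) j)).det
        = (of fun i j => φ i (x j)).det * (of fun i j => ψ i (x j)).det :=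
    det_submatrix_mul_det_submatrix (of fun i j => φ i (x j)) (of fun i j => ψ i (x j)) σ
  have key := integral_eq_factorial_smul_setIntegral_strictMono (integrable_det_mul_det h) hsymm
  rw [integral_det_mul_det h, Fintype.card_fin, nsmul_eq_mul] at key
  exact (mul_left_cancel₀ (Nat.cast_ne_zero.2 n.factorial_ne_zero) key).symm

end NoAtoms

end MeasureTheory

theorem stmt10_general (q : ℕ) (b : EReal)
    (φ ψ : Fin q → ℝ → ℝ)
    (hint : ∀ i j, IntegrableOn (fun t => φ i t * ψ j t)
      {t : ℝ | 0 < t ∧ (t : EReal) < b}) :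
    (∫ x in {x : Fin q → ℝ | (∀ i, 0 < x i ∧ ((x i : ℝ) : EReal) < b) ∧ StrictMono x},
        (Matrix.of fun i j => φ i (x j)).det * (Matrix.of fun i j => ψ i (x j)).det)
      = (Matrix.of fun i j =>
          ∫ t in {t : ℝ | 0 < t ∧ (t : EReal) < b}, φ i t * ψ j t).det := by
  set s : Set ℝ := {t | 0 < t ∧ (t : EReal) < b}
  have hregion : {x : Fin q → ℝ | (∀ i, 0 < x i ∧ ((x i : ℝ) : EReal) < b) ∧ StrictMono x}
      = {x | StrictMono x} ∩ Set.univ.pi fun _ => s := by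
    ext x
    simp only [Set.mem_inter_iff, Set.mem_univ_pi]
    exact and_comm
  rw [hregion, ← Measure.restrict_restrict measurableSet_setOf_strictMono, volume_pi,
    Measure.restrict_pi_pi]
  exact setIntegral_strictMono_det_mul_det (volume.restrict s) hint

/-- Andréief/Chiani determinant integration identity: for
measurable `φᵢ, ψᵢ : ℝ → ℝ` with each product `φᵢ·ψⱼ` integrable on `(0, b)`
(`b ∈ (0, ∞]`), the integral of `det[φᵢ(xⱼ)]·det[ψᵢ(xⱼ)]` over the ordered region
`0 < x₁ < ⋯ < x_q < b` equals `det[∫₀^b φᵢ(x)ψⱼ(x) dx]`. -/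
theorem stmt10 (q : ℕ) (hq : 1 ≤ q) (b : EReal) (hb : 0 < b)
    (φ ψ : Fin q → ℝ → ℝ)
    (hφ : ∀ i, Measurable (φ i)) (hψ : ∀ i, Measurable (ψ i))
    (hint : ∀ i j, IntegrableOn (fun t => φ i t * ψ j t)
      {t : ℝ | 0 < t ∧ (t : EReal) < b}) :
    (∫ x in {x : Fin q → ℝ | (∀ i, 0 < x i ∧ ((x i : ℝ) : EReal) < b) ∧ StrictMono x},
        (Matrix.of fun i j => φ i (x j)).det * (Matrix.of fun i j => ψ i (x j)).det)
      = (Matrix.of fun i j =>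
          ∫ t in {t : ℝ | 0 < t ∧ (t : EReal) < b}, φ i t * ψ j t).det :=
  stmt10_general q b φ ψ hint
end

section
/- For every real a > 0 and all natural numbers m and n: ∫₀^{1/a} β^m · e^{-β/(1 - a·β)} · (1 - a·β)^{-(m + n + 2)} dβ = Σ_{k=0}^{n} C(n, k) · a^k · (m + k)!, where C(n, k) is the binomial coefficient. (Obtained by the substitution y = β/(1 − a·β), which maps (0, 1/a) onto (0, ∞) and reduces the integral to ∫₀^∞ y^m (1 + a·y)^n e^{-y} dy.) -/
open MeasureTheory Set

lemma integrableOn_pow_mul_exp_neg_Ioi (p : ℕ) :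
    IntegrableOn (fun y : ℝ => y ^ p * Real.exp (-y)) (Ioi 0) := by
  refine (Real.GammaIntegral_convergent (s := (p : ℝ) + 1) (by positivity)).congr_fun
    (fun y _ => ?_) measurableSet_Ioi
  simp only [add_sub_cancel_right, Real.rpow_natCast, mul_comm]

lemma integral_pow_mul_exp_neg_Ioi (p : ℕ) :
    ∫ y in Ioi (0 : ℝ), y ^ p * Real.exp (-y) = (p.factorial : ℝ) := by
  rw [← Real.Gamma_nat_eq_factorial, Real.Gamma_eq_integral (by positivity)]
  refine setIntegral_congr_fun measurableSet_Ioi (fun y _ => ?_)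
  simp only [add_sub_cancel_right, Real.rpow_natCast, mul_comm]

/-- Expanding `(1 + a y)ⁿ` binomially reduces the integral to factorial moments of `e^{-y}`. -/
lemma integral_pow_mul_one_add_mul_pow_mul_exp_neg_Ioi (a : ℝ) (m n : ℕ) :
    ∫ y in Ioi (0 : ℝ), y ^ m * (1 + a * y) ^ n * Real.exp (-y)
      = ∑ k ∈ Finset.range (n + 1), (n.choose k : ℝ) * a ^ k * ((m + k).factorial : ℝ) := by
  have hexpand : ∀ y : ℝ, y ^ m * (1 + a * y) ^ n * Real.exp (-y)
      = ∑ k ∈ Finset.range (n + 1), (n.choose k : ℝ) * a ^ k * (y ^ (m + k) * Real.exp (-y)) := by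
    intro y
    rw [add_comm, add_pow, Finset.mul_sum, Finset.sum_mul]
    refine Finset.sum_congr rfl (fun k _ => ?_)
    ring
  simp_rw [hexpand]
  rw [integral_finsetSum _ (fun k _ => (integrableOn_pow_mul_exp_neg_Ioi (m + k)).const_mul _)]
  simp_rw [integral_const_mul, integral_pow_mul_exp_neg_Ioi]

section Substitution

variable {a : ℝ}

lemma hasDerivAt_div_one_add_mul {y : ℝ} (hy : 1 + a * y ≠ 0) :
    HasDerivAt (fun y => y / (1 + a * y)) ((1 + a * y) ^ 2)⁻¹ y := by
  have hden : HasDerivAt (fun y : ℝ => 1 + a * y) a y := by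
    simpa using ((hasDerivAt_id y).const_mul a).const_add 1
  have hquot : HasDerivAt (fun y => y / (1 + a * y))
      ((1 * (1 + a * y) - y * a) / (1 + a * y) ^ 2) y :=
    (hasDerivAt_id y).div hden hy
  convert hquot using 1
  field_simp
  ring

lemma injOn_div_one_add_mul (ha : 0 ≤ a) : InjOn (fun y : ℝ => y / (1 + a * y)) (Ioi 0) := by
  intro x hx y hy hxy
  have hx' : 0 < 1 + a * x := by have : (0 : ℝ) < x := hx; positivity
  have hy' : 0 < 1 + a * y := by have : (0 : ℝ) < y := hy; positivity
  rw [div_eq_div_iff hx'.ne' hy'.ne'] at hxy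
  linarith

lemma image_div_one_add_mul_Ioi (ha : 0 < a) :
    (fun y : ℝ => y / (1 + a * y)) '' Ioi 0 = Ioo 0 (1 / a) := by
  ext β
  constructor
  · rintro ⟨y, hy, rfl⟩
    have hy : (0 : ℝ) < y := hy
    have hden : 0 < 1 + a * y := by positivity
    refine ⟨div_pos hy hden, ?_⟩
    rw [div_lt_div_iff₀ hden ha]
    linarith
  · rintro ⟨hβ, hβa⟩
    have hden : 0 < 1 - a * β := by
      rw [lt_div_iff₀ ha] at hβa
      linarith
    refine ⟨β / (1 - a * β), div_pos hβ hden, ?_⟩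
    have hinv : 1 + a * (β / (1 - a * β)) = (1 - a * β)⁻¹ := by
      field_simp
      ring
    simp only [hinv, div_inv_eq_mul, div_mul_cancel₀ _ hden.ne']

/-- The substitution `β = y / (1 + a y)`, inverse to `y = β / (1 - a β)`, maps `(0, ∞)` onto
`(0, 1/a)`. -/
lemma integral_Ioo_zero_one_div_eq_integral_Ioi (ha : 0 < a) (g : ℝ → ℝ) :
    ∫ β in Ioo 0 (1 / a), g β
      = ∫ y in Ioi (0 : ℝ), ((1 + a * y) ^ 2)⁻¹ * g (y / (1 + a * y)) := by
  have hderiv : ∀ y ∈ Ioi (0 : ℝ),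
      HasDerivWithinAt (fun y => y / (1 + a * y)) ((1 + a * y) ^ 2)⁻¹ (Ioi 0) y :=
    fun y hy => (hasDerivAt_div_one_add_mul
      (by have : (0 : ℝ) < y := hy; positivity)).hasDerivWithinAt
  rw [← image_div_one_add_mul_Ioi ha, integral_image_eq_integral_abs_deriv_smul
    measurableSet_Ioi hderiv (injOn_div_one_add_mul ha.le)]
  simp only [abs_inv, abs_pow, sq_abs, smul_eq_mul]

lemma pow_mul_exp_mul_inv_pow_div_one_add_mul (m n : ℕ) {y : ℝ} (hy : 1 + a * y ≠ 0) :
    ((1 + a * y) ^ 2)⁻¹ * ((y / (1 + a * y)) ^ m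
        * Real.exp (-(y / (1 + a * y)) / (1 - a * (y / (1 + a * y))))
        * ((1 - a * (y / (1 + a * y))) ^ (m + n + 2))⁻¹)
      = y ^ m * (1 + a * y) ^ n * Real.exp (-y) := by
  have hcompl : 1 - a * (y / (1 + a * y)) = (1 + a * y)⁻¹ := by
    field_simp
    ring
  have hexp : -(y / (1 + a * y)) / (1 + a * y)⁻¹ = -y := by
    rw [div_inv_eq_mul, neg_mul, div_mul_cancel₀ _ hy]
  rw [hcompl, hexp, inv_pow, inv_inv, div_pow]
  field_simp
  ring

end Substitution

/-- For real `a > 0` and naturals `m, n`,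
`∫₀^{1/a} β^m e^{-β/(1-aβ)} (1-aβ)^{-(m+n+2)} dβ = Σ_{k=0}^{n} C(n,k) a^k (m+k)!`. -/
theorem stmt12 (a : ℝ) (ha : 0 < a) (m n : ℕ) :
    (∫ β in Set.Ioo (0 : ℝ) (1 / a),
        β ^ m * Real.exp (-β / (1 - a * β)) * ((1 - a * β) ^ (m + n + 2))⁻¹)
      = ∑ k ∈ Finset.range (n + 1),
          (n.choose k : ℝ) * a ^ k * (Nat.factorial (m + k) : ℝ) := by
  rw [integral_Ioo_zero_one_div_eq_integral_Ioi ha,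
    ← integral_pow_mul_one_add_mul_pow_mul_exp_neg_Ioi a m n]
  refine setIntegral_congr_fun measurableSet_Ioi (fun y hy => ?_)
  have hy : (0 : ℝ) < y := hy
  exact pow_mul_exp_mul_inv_pow_div_one_add_mul m n (by positivity)
end

section
/- (High SNR slope S_∞ = 1/2.) Let (Ω, P) be a probability space and let λ : Ω → ℝ be a random variable with λ > 0 almost surely and ω ↦ log λ(ω) integrable, and let a > 0 be a real constant. Then lim_{ρ → ∞} (∫_Ω log(1 + a·ρ·λ(ω)) dP(ω)) / (log ρ) = 1. Consequently, the ergodic capacity C(ρ) = (1/2)·E[log₂(1 + a·ρ·λ)] satisfies lim_{ρ→∞} C(ρ)/log₂ ρ = 1/2, i.e., the high-SNR slope is S_∞ = 1/2. -/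
/-!
For `ρ ≥ 1` the integrand is squeezed pointwise between
`log (a ρ) + log l` and `log ((1 + a) ρ) + log (1 + l)`, both integrable because `log l` is.
Integrating, `∫ log (1 + a ρ l)` differs from `log ρ` by a bounded amount, so its ratio to
`log ρ` tends to `1`. The base-2 statement is the same ratio, since the factors `log 2` cancel.
-/

open MeasureTheory Filter Topology

namespace Real

lemma log_add_log_le_log_one_add_mul {c x : ℝ} (hc : 0 < c) (hx : 0 < x) :
    log c + log x ≤ log (1 + c * x) := by
  rw [← log_mul hc.ne' hx.ne']
  exact log_le_log (by positivity) (by linarith)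

lemma log_one_add_mul_le {c x : ℝ} (hc : 0 ≤ c) (hx : 0 ≤ x) :
    log (1 + c * x) ≤ log (1 + c) + log (1 + x) := by
  rw [← log_mul (by positivity) (by positivity)]
  exact log_le_log (by positivity) (by nlinarith)

lemma log_one_add_le_log_two_add_abs_log {x : ℝ} (hx : 0 < x) :
    log (1 + x) ≤ log 2 + |log x| := by
  rcases le_or_gt x 1 with h | h
  · have : log (1 + x) ≤ log 2 := log_le_log (by linarith) (by linarith)
    linarith [abs_nonneg (log x)]
  · have : log (1 + x) ≤ log (2 * x) := log_le_log (by linarith) (by linarith)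
    rw [log_mul two_ne_zero hx.ne'] at this
    linarith [le_abs_self (log x)]

lemma tendsto_log_add_div_log_atTop (c : ℝ) :
    Tendsto (fun x => (log x + c) / log x) atTop (𝓝 1) := by
  have h : Tendsto (fun x => 1 + c / log x) atTop (𝓝 (1 + 0)) :=
    tendsto_const_nhds.add (tendsto_const_nhds.div_atTop tendsto_log_atTop)
  rw [add_zero] at h
  refine h.congr' ?_
  filter_upwards [eventually_gt_atTop 1] with x hx
  rw [add_div, div_self (log_pos hx).ne']

end Real

open Real

section

variable {Ω : Type*} [MeasurableSpace Ω] {μ : Measure Ω} {f : Ω → ℝ}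

lemma aemeasurable_of_integrable_log (hpos : ∀ᵐ ω ∂μ, 0 < f ω)
    (hint : Integrable (fun ω => log (f ω)) μ) : AEMeasurable f μ := by
  refine (measurable_exp.comp_aemeasurable hint.aemeasurable).congr ?_
  filter_upwards [hpos] with ω hω
  exact exp_log hω

lemma integrable_log_one_add_mul [IsFiniteMeasure μ] (hpos : ∀ᵐ ω ∂μ, 0 < f ω)
    (hint : Integrable (fun ω => log (f ω)) μ) {c : ℝ} (hc : 0 ≤ c) :
    Integrable (fun ω => log (1 + c * f ω)) μ := by
  have hmeas : AEMeasurable (fun ω => log (1 + c * f ω)) μ :=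
    measurable_log.comp_aemeasurable
      (((aemeasurable_of_integrable_log hpos hint).const_mul c).const_add 1)
  refine Integrable.mono' ((integrable_const (log (1 + c) + log 2)).add hint.abs)
    hmeas.aestronglyMeasurable ?_
  filter_upwards [hpos] with ω hω
  rw [norm_of_nonneg (log_nonneg (by nlinarith)), Pi.add_apply]
  linarith [log_one_add_mul_le hc hω.le, log_one_add_le_log_two_add_abs_log hω]

variable [IsProbabilityMeasure μ]

lemma log_add_integral_log_le_integral_log_one_add_mul (hpos : ∀ᵐ ω ∂μ, 0 < f ω)
    (hint : Integrable (fun ω => log (f ω)) μ) {c : ℝ} (hc : 0 < c) :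
    log c + ∫ ω, log (f ω) ∂μ ≤ ∫ ω, log (1 + c * f ω) ∂μ := by
  have h := integral_mono_ae ((integrable_const (log c)).add hint)
    (integrable_log_one_add_mul hpos hint hc.le)
    (by filter_upwards [hpos] with ω hω using log_add_log_le_log_one_add_mul hc hω)
  rwa [Pi.add_def, integral_add (integrable_const _) hint, integral_const, probReal_univ, one_smul] at h

lemma integral_log_one_add_mul_le_log_add_integral (hpos : ∀ᵐ ω ∂μ, 0 < f ω)
    (hint : Integrable (fun ω => log (f ω)) μ) {c : ℝ} (hc : 0 ≤ c) :
    ∫ ω, log (1 + c * f ω) ∂μ ≤ log (1 + c) + ∫ ω, log (1 + f ω) ∂μ := by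
  have hint₁ : Integrable (fun ω => log (1 + f ω)) μ := by
    simpa only [one_mul] using integrable_log_one_add_mul hpos hint zero_le_one
  have h := integral_mono_ae (integrable_log_one_add_mul hpos hint hc)
    ((integrable_const (log (1 + c))).add hint₁)
    (by filter_upwards [hpos] with ω hω using log_one_add_mul_le hc hω.le)
  rwa [Pi.add_def, integral_add (integrable_const _) hint₁, integral_const, probReal_univ, one_smul] at h

lemma tendsto_integral_log_one_add_mul_div_log (hpos : ∀ᵐ ω ∂μ, 0 < f ω)
    (hint : Integrable (fun ω => log (f ω)) μ) {a : ℝ} (ha : 0 < a) :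
    Tendsto (fun ρ => (∫ ω, log (1 + a * ρ * f ω) ∂μ) / log ρ) atTop (𝓝 1) := by
  refine tendsto_of_tendsto_of_tendsto_of_le_of_le'
    (tendsto_log_add_div_log_atTop (log a + ∫ ω, log (f ω) ∂μ))
    (tendsto_log_add_div_log_atTop (log (1 + a) + ∫ ω, log (1 + f ω) ∂μ)) ?_ ?_
    <;> filter_upwards [eventually_gt_atTop 1] with ρ hρ
    <;> refine div_le_div_of_nonneg_right ?_ (log_pos hρ).le
  · have h := log_add_integral_log_le_integral_log_one_add_mul hpos hint
      (mul_pos ha (zero_lt_one.trans hρ))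
    rw [log_mul ha.ne' (by positivity)] at h
    linarith
  · have h := integral_log_one_add_mul_le_log_add_integral hpos hint
      (mul_pos ha (zero_lt_one.trans hρ)).le
    have hρa : log (1 + a * ρ) ≤ log (1 + a) + log ρ := by
      rw [← log_mul (by positivity) (by positivity)]
      exact log_le_log (by positivity) (by nlinarith)
    linarith

end

/-- High SNR slope `S_∞ = 1/2`: if `l > 0` a.s. with `log l`
integrable and `a > 0`, then `(∫ log(1 + a·ρ·l) dP)/log ρ → 1` as `ρ → ∞`;
consequently the ergodic capacity `C(ρ) = (1/2)·E[log₂(1 + a·ρ·l)]` satisfies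
`C(ρ)/log₂ ρ → 1/2`. -/
theorem stmt15 {Ω : Type*} [MeasureSpace Ω]
    [IsProbabilityMeasure (volume : Measure Ω)]
    (l : Ω → ℝ) (hpos : ∀ᵐ ω ∂(volume : Measure Ω), 0 < l ω)
    (hint : Integrable (fun ω => Real.log (l ω)))
    (a : ℝ) (ha : 0 < a) :
    Tendsto (fun ρ : ℝ => (∫ ω, Real.log (1 + a * ρ * l ω)) / Real.log ρ)
      atTop (nhds 1) ∧
    Tendsto (fun ρ : ℝ =>
        ((1 / 2) * ∫ ω, Real.logb 2 (1 + a * ρ * l ω)) / Real.logb 2 ρ)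
      atTop (nhds (1 / 2)) := by
  have h := tendsto_integral_log_one_add_mul_div_log hpos hint ha
  refine ⟨h, ?_⟩
  have hlog2 : log 2 ≠ 0 := (log_pos one_lt_two).ne'
  convert h.const_mul (1 / 2 : ℝ) using 2 with ρ
  · simp only [logb, integral_div]
    field_simp
  · rw [mul_one]
end

section
/- (High SNR power offset.) Let (Ω, P) be a probability space and let λ : Ω → ℝ be a random variable with λ > 0 almost surely and ω ↦ log λ(ω) integrable. Then lim_{ρ → ∞} ( ∫_Ω log(1 + ρ·λ(ω)) dP(ω) − log ρ ) = ∫_Ω log λ(ω) dP(ω). Consequently, for fixed a > 0 the ergodic capacity C(ρ) = (1/2)·E[log₂(1 + a·ρ·λ)] has high-SNR power offset L_∞ = lim_{ρ→∞}(log₂ ρ − C(ρ)/S_∞) = −E[log₂(a·λ)] with S_∞ = 1/2. -/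
/-!
Writing `log (1 + ρ x) = log ρ + log (ρ⁻¹ + x)`, the first claim says that
`∫ log (ρ⁻¹ + λ) → ∫ log λ`. For `ρ ≥ 1` the integrand is dominated by the integrable
`|log λ| + log 2`, so this is dominated convergence. The power offset follows by
substituting `a ρ` for `ρ` and dividing by `log 2`.
-/

open MeasureTheory Filter Topology

namespace Real

lemma log_one_add_mul_eq_log_add_log_inv_add {ρ x : ℝ} (hρ : 0 < ρ) (hx : 0 < x) :
    log (1 + ρ * x) = log ρ + log (ρ⁻¹ + x) := by
  rw [← log_mul hρ.ne' (by positivity), mul_add, mul_inv_cancel₀ hρ.ne']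

lemma abs_log_add_le {t x : ℝ} (ht₀ : 0 ≤ t) (ht₁ : t ≤ 1) (hx : 0 < x) :
    |log (t + x)| ≤ |log x| + log 2 := by
  have hlower : log x ≤ log (t + x) := log_le_log hx (by linarith)
  have hupper : log (t + x) ≤ log 2 + |log x| := by
    rcases le_or_gt x 1 with hx₁ | hx₁
    · have : log (t + x) ≤ log 2 := log_le_log (by linarith) (by linarith)
      linarith [abs_nonneg (log x)]
    · have : log (t + x) ≤ log (2 * x) := log_le_log (by linarith) (by linarith)
      rw [log_mul two_ne_zero hx.ne'] at this
      linarith [le_abs_self (log x)]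
  rw [abs_le]
  constructor <;> linarith [neg_abs_le (log x), log_nonneg one_le_two]

end Real

section Finite

variable {Ω : Type*} [MeasurableSpace Ω] {μ : Measure Ω} {l : Ω → ℝ}

lemma aestronglyMeasurable_of_log (hpos : ∀ᵐ ω ∂μ, 0 < l ω)
    (hlog : AEStronglyMeasurable (fun ω => Real.log (l ω)) μ) : AEStronglyMeasurable l μ :=
  (Real.continuous_exp.comp_aestronglyMeasurable hlog).congr <|
    hpos.mono fun _ h => Real.exp_log h

lemma aestronglyMeasurable_log_const_add (hl : AEStronglyMeasurable l μ) (t : ℝ) :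
    AEStronglyMeasurable (fun ω => Real.log (t + l ω)) μ :=
  (Real.measurable_log.comp_aemeasurable (hl.aemeasurable.const_add t)).aestronglyMeasurable

lemma ae_norm_log_inv_add_le (hpos : ∀ᵐ ω ∂μ, 0 < l ω) {ρ : ℝ} (hρ : 1 ≤ ρ) :
    ∀ᵐ ω ∂μ, ‖Real.log (ρ⁻¹ + l ω)‖ ≤ |Real.log (l ω)| + Real.log 2 := by
  filter_upwards [hpos] with ω h
  exact Real.abs_log_add_le (by positivity) (inv_le_one_of_one_le₀ hρ) h

variable [IsFiniteMeasure μ]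

lemma integrable_log_inv_add (hpos : ∀ᵐ ω ∂μ, 0 < l ω)
    (hint : Integrable (fun ω => Real.log (l ω)) μ) {ρ : ℝ} (hρ : 1 ≤ ρ) :
    Integrable (fun ω => Real.log (ρ⁻¹ + l ω)) μ :=
  (hint.abs.add (integrable_const _)).mono'
    (aestronglyMeasurable_log_const_add (aestronglyMeasurable_of_log hpos hint.1) _)
    (ae_norm_log_inv_add_le hpos hρ)

lemma tendsto_integral_log_inv_add (hpos : ∀ᵐ ω ∂μ, 0 < l ω)
    (hint : Integrable (fun ω => Real.log (l ω)) μ) :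
    Tendsto (fun ρ : ℝ => ∫ ω, Real.log (ρ⁻¹ + l ω) ∂μ) atTop
      (𝓝 (∫ ω, Real.log (l ω) ∂μ)) := by
  refine tendsto_integral_filter_of_dominated_convergence _
    (Eventually.of_forall fun ρ =>
      aestronglyMeasurable_log_const_add (aestronglyMeasurable_of_log hpos hint.1) ρ⁻¹)
    ((eventually_ge_atTop 1).mono fun _ => ae_norm_log_inv_add_le hpos)
    (hint.abs.add (integrable_const _)) ?_
  filter_upwards [hpos] with ω h
  have hinv : Tendsto (fun ρ : ℝ => ρ⁻¹ + l ω) atTop (𝓝 (l ω)) := by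
    simpa only [zero_add] using tendsto_inv_atTop_zero.add_const (l ω)
  exact (Real.continuousAt_log h.ne').tendsto.comp hinv

end Finite

section Probability

variable {Ω : Type*} [MeasurableSpace Ω] {μ : Measure Ω} [IsProbabilityMeasure μ]
  {l : Ω → ℝ}

theorem tendsto_integral_log_one_add_mul_sub_log (hpos : ∀ᵐ ω ∂μ, 0 < l ω)
    (hint : Integrable (fun ω => Real.log (l ω)) μ) :
    Tendsto (fun ρ : ℝ => (∫ ω, Real.log (1 + ρ * l ω) ∂μ) - Real.log ρ) atTop
      (𝓝 (∫ ω, Real.log (l ω) ∂μ)) := by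
  refine (tendsto_integral_log_inv_add hpos hint).congr' ?_
  filter_upwards [eventually_ge_atTop 1] with ρ hρ
  have hρ₀ : 0 < ρ := zero_lt_one.trans_le hρ
  rw [integral_congr_ae (hpos.mono fun ω h =>
      Real.log_one_add_mul_eq_log_add_log_inv_add hρ₀ h),
    integral_add (integrable_const _) (integrable_log_inv_add hpos hint hρ), integral_const,
    probReal_univ, one_smul, add_sub_cancel_left]

lemma integral_log_const_mul {a : ℝ} (ha : 0 < a) (hpos : ∀ᵐ ω ∂μ, 0 < l ω)
    (hint : Integrable (fun ω => Real.log (l ω)) μ) :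
    ∫ ω, Real.log (a * l ω) ∂μ = Real.log a + ∫ ω, Real.log (l ω) ∂μ := by
  rw [integral_congr_ae (hpos.mono fun ω h => Real.log_mul ha.ne' h.ne'),
    integral_add (integrable_const _) hint, integral_const, probReal_univ, one_smul]

theorem tendsto_logb_sub_integral_logb_one_add_mul (b : ℝ) {a : ℝ} (ha : 0 < a)
    (hpos : ∀ᵐ ω ∂μ, 0 < l ω) (hint : Integrable (fun ω => Real.log (l ω)) μ) :
    Tendsto (fun ρ : ℝ => Real.logb b ρ - ∫ ω, Real.logb b (1 + a * ρ * l ω) ∂μ) atTop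
      (𝓝 (-∫ ω, Real.logb b (a * l ω) ∂μ)) := by
  have hlim := (((tendsto_integral_log_one_add_mul_sub_log hpos hint).comp
    (tendsto_id.const_mul_atTop ha)).neg.sub_const (Real.log a)).div_const (Real.log b)
  have hvalue : -∫ ω, Real.logb b (a * l ω) ∂μ =
      (-(∫ ω, Real.log (l ω) ∂μ) - Real.log a) / Real.log b := by
    simp only [Real.logb, integral_div, integral_log_const_mul ha hpos hint]
    ring
  rw [hvalue]
  refine hlim.congr' ?_
  filter_upwards [eventually_gt_atTop 0] with ρ hρ
  simp only [Function.comp_apply, id, Real.logb, integral_div, Real.log_mul ha.ne' hρ.ne',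
    mul_assoc]
  ring

end Probability

/-- High SNR power offset: if `l > 0` a.s. with `log l` integrable,
then `∫ log(1 + ρ·l) dP − log ρ → ∫ log l dP` as `ρ → ∞`; consequently for `a > 0`
the ergodic capacity `C(ρ) = (1/2)·E[log₂(1 + a·ρ·l)]` has high-SNR power offset
`L_∞ = lim (log₂ ρ − C(ρ)/(1/2)) = −E[log₂(a·l)]`. -/
theorem stmt16 {Ω : Type*} [MeasureSpace Ω]
    [IsProbabilityMeasure (volume : Measure Ω)]
    (l : Ω → ℝ) (hpos : ∀ᵐ ω ∂(volume : Measure Ω), 0 < l ω)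
    (hint : Integrable (fun ω => Real.log (l ω))) :
    Tendsto (fun ρ : ℝ => (∫ ω, Real.log (1 + ρ * l ω)) - Real.log ρ)
      atTop (nhds (∫ ω, Real.log (l ω))) ∧
    ∀ a : ℝ, 0 < a →
      Tendsto (fun ρ : ℝ =>
          Real.logb 2 ρ - ((1 / 2) * ∫ ω, Real.logb 2 (1 + a * ρ * l ω)) / (1 / 2))
        atTop (nhds (-(∫ ω, Real.logb 2 (a * l ω)))) := by
  refine ⟨tendsto_integral_log_one_add_mul_sub_log hpos hint, fun a ha => ?_⟩
  simpa only [mul_div_cancel_left₀ _ (one_div_ne_zero (two_ne_zero' ℝ))] using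
    tendsto_logb_sub_integral_logb_one_add_mul 2 ha hpos hint
end
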